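/- arXiv:1503.07815 — 3 statements merged into one kernel-verified Lean document; each statement's English description precedes it below -/
import Mathlib

section
/- Let R be a ring such that every finitely generated right R-module embeds essentially in a free right R-module. Then R is quasi-Frobenius (QF). -/
/-! Common definitions: right `R`-modules are formalized as modules over `Rᵐᵒᵖ`;
`R` itself is a right `R`-module via `Semiring.toOppositeModule`. -/

namespace PFPaper

open Function MulOpposite

/-- `N` is an essential submodule of `M`. -/
def IsEssential {A : Type} [Ring A] {M : Type} [AddCommGroup M] [Module A M]
    (N : Submodule A M) : Prop :=
  ∀ X : Submodule A M, X ≠ ⊥ → N ⊓ X ≠ ⊥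

/-- `N` is an essential submodule of the submodule `D`. -/
def IsEssentialIn {A : Type} [Ring A] {M : Type} [AddCommGroup M] [Module A M]
    (N D : Submodule A M) : Prop :=
  N ≤ D ∧ ∀ X : Submodule A M, X ≤ D → X ≠ ⊥ → N ⊓ X ≠ ⊥

/-- The socle of a module: the sum of all simple submodules. -/
def socle (A : Type) [Ring A] (M : Type) [AddCommGroup M] [Module A M] : Submodule A M :=
  sSup {S : Submodule A M | IsSimpleModule A ↥S}

/-- `D` is a direct summand of `M`. -/
def IsDirectSummand {A : Type} [Ring A] {M : Type} [AddCommGroup M] [Module A M]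
    (D : Submodule A M) : Prop :=
  ∃ D' : Submodule A M, IsCompl D D'

/-- `E` together with the embedding `i : M → E` is an injective envelope of `M`. -/
def IsInjectiveEnvelope (A : Type) [Ring A] (M : Type) [AddCommGroup M] [Module A M]
    (E : Type) [AddCommGroup E] [Module A E] (i : M →ₗ[A] E) : Prop :=
  Module.Injective A E ∧ Function.Injective i ∧ IsEssential (LinearMap.range i)

/-- `M` is a cyclic module. -/
def IsCyclicModule (A : Type) [Ring A] (M : Type) [AddCommGroup M] [Module A M] : Prop :=
  ∃ x : M, Submodule.span A {x} = ⊤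

/-- `M` embeds in a free `A`-module. -/
def EmbedsInFree (A : Type) [Ring A] (M : Type) [AddCommGroup M] [Module A M] : Prop :=
  ∃ (ι : Type) (f : M →ₗ[A] (ι →₀ A)), Function.Injective f

/-- `M` embeds essentially in a free `A`-module. -/
def EmbedsEssentiallyInFree (A : Type) [Ring A] (M : Type) [AddCommGroup M] [Module A M] : Prop :=
  ∃ (ι : Type) (f : M →ₗ[A] (ι →₀ A)),
    Function.Injective f ∧ IsEssential (LinearMap.range f)

/-- `M` embeds essentially in a projective `A`-module. -/
def EmbedsEssentiallyInProjective (A : Type) [Ring A] (M : Type) [AddCommGroup M]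
    [Module A M] : Prop :=
  ∃ (P : Type) (_ : AddCommGroup P) (_ : Module A P), Module.Projective A P ∧
    ∃ f : M →ₗ[A] P, Function.Injective f ∧ IsEssential (LinearMap.range f)

variable (R : Type) [Ring R]

/-- The right annihilator of an element, as a right ideal. -/
def rightAnn (r : R) : Submodule Rᵐᵒᵖ R where
  carrier := {x : R | r * x = 0}
  add_mem' := by
    intro a b ha hb
    simp only [Set.mem_setOf_eq] at *
    rw [mul_add, ha, hb, add_zero]
  zero_mem' := by simp
  smul_mem' := by
    intro c x hx
    simp only [Set.mem_setOf_eq] at *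
    show r * (x * c.unop) = 0
    rw [← mul_assoc, hx, zero_mul]

/-- The right singular ideal `Z(R_R)`: elements with essential right annihilator. -/
def rightSingular : Set R := {r : R | IsEssential (rightAnn R r)}

/-- `R` is a right Kasch ring: every simple right `R`-module embeds in `R_R`. -/
def RightKasch : Prop :=
  ∀ (M : Type) [AddCommGroup M] [Module Rᵐᵒᵖ M], IsSimpleModule Rᵐᵒᵖ M →
    ∃ f : M →ₗ[Rᵐᵒᵖ] R, Function.Injective f

/-- `R_R` is a cogenerator: every right `R`-module embeds in a direct product of copies of `R`. -/
def RightCogenerator : Prop :=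
  ∀ (M : Type) [AddCommGroup M] [Module Rᵐᵒᵖ M],
    ∃ (ι : Type) (f : M →ₗ[Rᵐᵒᵖ] (ι → R)), Function.Injective f

/-- `R` is right PF: right self-injective and `R_R` is a cogenerator. -/
def RightPF : Prop :=
  Module.Injective Rᵐᵒᵖ R ∧ RightCogenerator R

/-- `R` is quasi-Frobenius: right self-injective and right artinian. -/
def IsQF : Prop :=
  Module.Injective Rᵐᵒᵖ R ∧ IsArtinian Rᵐᵒᵖ R

/-- `R_R` is extending (CS): every right ideal is essential in a direct summand. -/
def RightExtending : Prop :=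
  ∀ I : Submodule Rᵐᵒᵖ R, ∃ D : Submodule Rᵐᵒᵖ R, IsDirectSummand D ∧ IsEssentialIn I D

/-- `R` is right CF: every cyclic right `R`-module embeds in a free module. -/
def RightCF : Prop :=
  ∀ (M : Type) [AddCommGroup M] [Module Rᵐᵒᵖ M], IsCyclicModule Rᵐᵒᵖ M →
    EmbedsInFree Rᵐᵒᵖ M

/-- `R` is right FGF: every finitely generated right `R`-module embeds in a free module. -/
def RightFGF : Prop :=
  ∀ (M : Type) [AddCommGroup M] [Module Rᵐᵒᵖ M], Module.Finite Rᵐᵒᵖ M →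
    EmbedsInFree Rᵐᵒᵖ M

/-- The product `f n * f (n-1) * ⋯ * f 0` of an initial segment of a sequence. -/
def seqProd {T : Type} [Ring T] (f : ℕ → T) : ℕ → T
  | 0 => f 0
  | n + 1 => f (n + 1) * seqProd f n

/-- A subset `I` of a ring is right T-nilpotent. -/
def IsRightTNilpotent {T : Type} [Ring T] (I : Set T) : Prop :=
  ∀ f : ℕ → T, (∀ n, f n ∈ I) → ∃ n, seqProd f n = 0

/-- A ring `S` has nil Jacobson radical in every homomorphic image
(equivalently, `J(S/N)` is nil for every two-sided ideal `N` of `S`). -/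
def CompletelyNilJacobson (S : Type) [Ring S] : Prop :=
  ∀ (T : Type) [Ring T] (ψ : S →+* T), Function.Surjective ψ →
    ∀ x ∈ (⊥ : Ideal T).jacobson, IsNilpotent x

/-- A ring `S` has completely right T-nilpotent Jacobson radical: every homomorphic
image of `S` has right T-nilpotent Jacobson radical. -/
def CompletelyRightTNilpotentJacobson (S : Type) [Ring S] : Prop :=
  ∀ (T : Type) [Ring T] (ψ : S →+* T), Function.Surjective ψ →
    IsRightTNilpotent ((⊥ : Ideal T).jacobson : Set T)

/-- The quotient ring `R / Z(R_R)` satisfies a property `Q` of rings: every surjective ring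
homomorphism with kernel exactly `Z(R_R)` lands in a ring satisfying `Q`. -/
def QuotientBySingularSatisfies (Q : ∀ (S : Type) [Ring S], Prop) : Prop :=
  ∀ (S : Type) [Ring S] (φ : R →+* S), Function.Surjective φ →
    (∀ r : R, φ r = 0 ↔ r ∈ rightSingular R) → Q S

/-- A ring is von Neumann regular. -/
def VonNeumannRegular (S : Type) [Ring S] : Prop :=
  ∀ a : S, ∃ x : S, a * x * a = a

/-- `R` is semilocal: `R/J(R)` is a semisimple ring. -/
def Semilocal : Prop :=
  ∀ (S : Type) [Ring S] (φ : R →+* S), Function.Surjective φ →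
    (∀ r : R, φ r = 0 ↔ r ∈ (⊥ : Ideal R).jacobson) → IsSemisimpleRing S

end PFPaper

/-! Derived notions. -/

namespace PFPaper

variable (R : Type) [Ring R]

/-- `R` is right `R`-tight: every cyclic submodule of the injective envelope `E(R_R)`
embeds in `R_R`. -/
def RightRTight : Prop :=
  ∀ (E : Type) [AddCommGroup E] [Module Rᵐᵒᵖ E] (i : R →ₗ[Rᵐᵒᵖ] E),
    IsInjectiveEnvelope Rᵐᵒᵖ R E i → ∀ x : E,
      ∃ f : ↥(Submodule.span Rᵐᵒᵖ ({x} : Set E)) →ₗ[Rᵐᵒᵖ] R, Function.Injective f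

/-- `R` is right tight: every finitely generated submodule of the injective envelope `E(R_R)`
embeds in `R_R`. -/
def RightTight : Prop :=
  ∀ (E : Type) [AddCommGroup E] [Module Rᵐᵒᵖ E] (i : R →ₗ[Rᵐᵒᵖ] E),
    IsInjectiveEnvelope Rᵐᵒᵖ R E i → ∀ C : Submodule Rᵐᵒᵖ E, C.FG →
      ∃ f : ↥C →ₗ[Rᵐᵒᵖ] R, Function.Injective f

/-- `R` is generalized right `R`-tight: every cyclic submodule of `E(R_R)` embeds in a free
right `R`-module. -/
def GeneralizedRightRTight : Prop :=
  ∀ (E : Type) [AddCommGroup E] [Module Rᵐᵒᵖ E] (i : R →ₗ[Rᵐᵒᵖ] E),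
    IsInjectiveEnvelope Rᵐᵒᵖ R E i → ∀ x : E,
      EmbedsInFree Rᵐᵒᵖ ↥(Submodule.span Rᵐᵒᵖ ({x} : Set E))

/-- `R` is generalized right tight: every finitely generated submodule of `E(R_R)` embeds in a
free right `R`-module. -/
def GeneralizedRightTight : Prop :=
  ∀ (E : Type) [AddCommGroup E] [Module Rᵐᵒᵖ E] (i : R →ₗ[Rᵐᵒᵖ] E),
    IsInjectiveEnvelope Rᵐᵒᵖ R E i → ∀ C : Submodule Rᵐᵒᵖ E, C.FG →
      EmbedsInFree Rᵐᵒᵖ ↥C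

/-- The injective envelope of every simple right `R`-module is finitely generated. -/
def SimpleEnvelopesFinite : Prop :=
  ∀ (M : Type) [AddCommGroup M] [Module Rᵐᵒᵖ M], IsSimpleModule Rᵐᵒᵖ M →
    ∀ (E : Type) [AddCommGroup E] [Module Rᵐᵒᵖ E] (i : M →ₗ[Rᵐᵒᵖ] E),
      IsInjectiveEnvelope Rᵐᵒᵖ M E i → Module.Finite Rᵐᵒᵖ E

/-- The injective envelope of every simple right `R`-module is projective. -/
def SimpleEnvelopesProjective : Prop :=
  ∀ (M : Type) [AddCommGroup M] [Module Rᵐᵒᵖ M], IsSimpleModule Rᵐᵒᵖ M →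
    ∀ (E : Type) [AddCommGroup E] [Module Rᵐᵒᵖ E] (i : M →ₗ[Rᵐᵒᵖ] E),
      IsInjectiveEnvelope Rᵐᵒᵖ M E i → Module.Projective Rᵐᵒᵖ E

/-- `R` is right automorphism-invariant: `φ(R) ⊆ R` for every automorphism `φ` of `E(R_R)`. -/
def RightAutInvariant : Prop :=
  ∀ (E : Type) [AddCommGroup E] [Module Rᵐᵒᵖ E] (i : R →ₗ[Rᵐᵒᵖ] E),
    IsInjectiveEnvelope Rᵐᵒᵖ R E i → ∀ (φ : E ≃ₗ[Rᵐᵒᵖ] E) (r : R),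
      φ (i r) ∈ LinearMap.range i

/-- `R` is left Kasch: every simple left `R`-module embeds in `_R R`. -/
def LeftKasch : Prop :=
  ∀ (M : Type) [AddCommGroup M] [Module R M], IsSimpleModule R M →
    ∃ f : M →ₗ[R] R, Function.Injective f

/-- `R` is left perfect: `R` satisfies the descending chain condition on principal
right ideals. -/
def LeftPerfect : Prop :=
  ∀ f : ℕ → Submodule Rᵐᵒᵖ R, (∀ n, ∃ x : R, f n = Submodule.span Rᵐᵒᵖ ({x} : Set R)) →
    (∀ n, f (n + 1) ≤ f n) → ∃ n, ∀ m, n ≤ m → f m = f n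

/-- A module is indecomposable: it is nonzero and has no nontrivial direct sum
decomposition. -/
def IndecomposableModule (A : Type) [Ring A] (M : Type) [AddCommGroup M] [Module A M] : Prop :=
  Nontrivial M ∧ ∀ X Y : Submodule A M, IsCompl X Y → X = ⊥ ∨ Y = ⊥

/-- A right `R`-module `M` is `R`-tight: every cyclic submodule of `E(M)` embeds in `M`. -/
def ModuleRTight (A : Type) [Ring A] (M : Type) [AddCommGroup M] [Module A M] : Prop :=
  ∀ (E : Type) [AddCommGroup E] [Module A E] (i : M →ₗ[A] E),
    IsInjectiveEnvelope A M E i → ∀ x : E,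
      ∃ f : ↥(Submodule.span A ({x} : Set E)) →ₗ[A] M, Function.Injective f

/-- The submodule `P · Z(R_R)` of a right `R`-module `E`, for `P` a submodule of `E`. -/
def smulSingular (E : Type) [AddCommGroup E] [Module Rᵐᵒᵖ E] (P : Submodule Rᵐᵒᵖ E) :
    Submodule Rᵐᵒᵖ E :=
  Submodule.span Rᵐᵒᵖ {y : E | ∃ p ∈ P, ∃ z ∈ rightSingular R, y = MulOpposite.op z • p}

/-- The ring `R/Z(R_R)` has completely nil Jacobson radical. -/
def SingularQuotientCompletelyNil : Prop :=
  ∀ (S : Type) [Ring S] (φ : R →+* S), Function.Surjective φ →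
    (∀ r : R, φ r = 0 ↔ r ∈ rightSingular R) → CompletelyNilJacobson S

/-- The Jacobson radical of the ring `R/Z(R_R)` is completely right T-nilpotent. -/
def SingularQuotientCompletelyRightTNilpotent : Prop :=
  ∀ (S : Type) [Ring S] (φ : R →+* S), Function.Surjective φ →
    (∀ r : R, φ r = 0 ↔ r ∈ rightSingular R) → CompletelyRightTNilpotentJacobson S

/-- The ring `R/Z(R_R)` is von Neumann regular. -/
def SingularQuotientVonNeumannRegular : Prop :=
  ∀ (S : Type) [Ring S] (φ : R →+* S), Function.Surjective φ →
    (∀ r : R, φ r = 0 ↔ r ∈ rightSingular R) → VonNeumannRegular S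

/-- The ring `R/J(R)` is von Neumann regular. -/
def JacobsonQuotientVonNeumannRegular : Prop :=
  ∀ (S : Type) [Ring S] (φ : R →+* S), Function.Surjective φ →
    (∀ r : R, φ r = 0 ↔ r ∈ (⊥ : Ideal R).jacobson) → VonNeumannRegular S

/-- `R_R` is a continuous module: it is extending, and every right ideal isomorphic to a
direct summand of `R_R` is itself a direct summand. -/
def RightContinuous : Prop :=
  RightExtending R ∧
    ∀ I : Submodule Rᵐᵒᵖ R,
      (∃ D : Submodule Rᵐᵒᵖ R, IsDirectSummand D ∧ Nonempty (↥I ≃ₗ[Rᵐᵒᵖ] ↥D)) →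
      IsDirectSummand I

end PFPaper

namespace PFPaper
namespace Statement2Aux

variable {A : Type} [Ring A]

section Essential

variable {M N : Type} [AddCommGroup M] [Module A M] [AddCommGroup N] [Module A N]

lemma IsEssential.inf {V V' : Submodule A M} (hV : IsEssential V) (hV' : IsEssential V') :
    IsEssential (V ⊓ V') := by
  intro X hX
  have h2 := hV _ (hV' X hX)
  rwa [← inf_assoc] at h2

lemma IsEssential.comap (f : M →ₗ[A] N) (hf : Function.Injective f)
    {V : Submodule A N} (hV : IsEssential V) : IsEssential (V.comap f) := by
  intro X hX
  obtain ⟨x, hxX, hx0⟩ := (Submodule.ne_bot_iff X).mp hX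
  have hmap : Submodule.map f X ≠ ⊥ := by
    rw [Submodule.ne_bot_iff]
    exact ⟨f x, ⟨x, hxX, rfl⟩, fun h0 => hx0 (hf (by simpa using h0))⟩
  obtain ⟨y, ⟨hyV, hyX⟩, hy0⟩ := (Submodule.ne_bot_iff _).mp (hV _ hmap)
  obtain ⟨x', hx'X, rfl⟩ := hyX
  rw [Submodule.ne_bot_iff]
  exact ⟨x', ⟨hyV, hx'X⟩, fun h0 => hy0 (by rw [h0, map_zero])⟩

lemma atom_le {S₀ : Submodule A M} (hEss : IsEssential S₀) (hAtom : IsAtom S₀)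
    {X : Submodule A M} (hX : X ≠ ⊥) : S₀ ≤ X := by
  have h1 := hEss X hX
  rcases lt_or_eq_of_le (inf_le_left : S₀ ⊓ X ≤ S₀) with hlt | heq
  · exact absurd (hAtom.2 _ hlt) h1
  · rw [← heq]; exact inf_le_right

end Essential

section Atom

variable (A)

/-- The submodule of `ι →₀ A` of elements all of whose coordinates lie in `S₀`. -/
def coordSub (S₀ : Submodule A A) (ι : Type) : Submodule A (ι →₀ A) where
  carrier := {x | ∀ i, x i ∈ S₀}
  add_mem' := fun {a b} ha hb i => by
    rw [Finsupp.add_apply]; exact S₀.add_mem (ha i) (hb i)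
  zero_mem' := fun i => by simp
  smul_mem' := fun c x hx i => by
    rw [Finsupp.smul_apply]; exact S₀.smul_mem c (hx i)

variable {A}

lemma coordSub_essential {S₀ : Submodule A A} (hEss : IsEssential S₀) (ι : Type) :
    IsEssential (coordSub A S₀ ι) := by
  classical
  have key : ∀ (t : Finset ι) (x : ι →₀ A), x ≠ 0 →
      (x.support.filter (fun i => x i ∉ S₀)) ⊆ t →
      ∃ c : A, c • x ≠ 0 ∧ ∀ i, (c • x) i ∈ S₀ := by
    intro t
    induction t using Finset.strongInduction with
    | _ t ih =>
      intro x hx0 hsub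
      by_cases hbad : (x.support.filter (fun i => x i ∉ S₀)) = ∅
      · refine ⟨1, by simpa using hx0, fun i => ?_⟩
        rw [one_smul]
        by_cases hi : x i = 0
        · rw [hi]; exact S₀.zero_mem
        · by_contra hmem
          have : i ∈ x.support.filter (fun i => x i ∉ S₀) := by
            simp [Finsupp.mem_support_iff, hi, hmem]
          rw [hbad] at this; exact absurd this (Finset.notMem_empty i)
      · obtain ⟨i, hi⟩ := Finset.nonempty_iff_ne_empty.mpr hbad
        have hiS : x i ∉ S₀ := by
          have := (Finset.mem_filter.mp hi).2; simpa using this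
        have hi0 : x i ≠ 0 := by
          have := (Finset.mem_filter.mp hi).1; simpa [Finsupp.mem_support_iff] using this
        have hspan : Submodule.span A ({x i} : Set A) ≠ ⊥ := by
          rw [Submodule.ne_bot_iff]
          exact ⟨x i, Submodule.mem_span_singleton_self _, hi0⟩
        obtain ⟨y, ⟨hyS, hyspan⟩, hy0⟩ := (Submodule.ne_bot_iff _).mp (hEss _ hspan)
        obtain ⟨r, rfl⟩ := Submodule.mem_span_singleton.mp hyspan
        set x' : ι →₀ A := r • x with hx'
        have hx'i : x' i = r • x i := by rw [hx', Finsupp.smul_apply]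
        have hx'0 : x' ≠ 0 := by
          intro h0
          apply hy0
          rw [← hx'i, h0]; simp
        have hsub' : (x'.support.filter (fun j => x' j ∉ S₀)) ⊆ t.erase i := by
          intro j hj
          obtain ⟨hj1, hj2⟩ := Finset.mem_filter.mp hj
          simp only [Finsupp.mem_support_iff] at hj1
          have hj2' : x' j ∉ S₀ := by simpa using hj2
          have hji : j ≠ i := by
            intro hji; rw [hji, hx'i] at hj2'; exact hj2' hyS
          have hxj : x j ∉ S₀ := by
            intro hmem
            exact hj2' (by rw [hx', Finsupp.smul_apply]; exact S₀.smul_mem r hmem)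
          have hxj0 : x j ≠ 0 := by
            intro h0; apply hj1; rw [hx', Finsupp.smul_apply, h0]; simp
          refine Finset.mem_erase.mpr ⟨hji, hsub ?_⟩
          simp [Finset.mem_filter, Finsupp.mem_support_iff, hxj0, hxj]
        have hit : i ∈ t := hsub hi
        obtain ⟨c, hc0, hcS⟩ := ih (t.erase i) (Finset.erase_ssubset hit) x' hx'0 hsub'
        refine ⟨c * r, ?_, ?_⟩
        · rwa [mul_smul]
        · intro j; rw [mul_smul]; exact hcS j
  intro X hX
  obtain ⟨x, hxX, hx0⟩ := (Submodule.ne_bot_iff X).mp hX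
  obtain ⟨c, hc0, hcS⟩ := key _ x hx0 (le_refl _)
  rw [Submodule.ne_bot_iff]
  exact ⟨c • x, ⟨hcS, X.smul_mem c hxX⟩, hc0⟩

lemma isArtinian_of_isAtom {M : Type} [AddCommGroup M] [Module A M]
    {S₀ : Submodule A M} (hAtom : IsAtom S₀) : IsArtinian A ↥S₀ := by
  haveI : IsSimpleModule A ↥S₀ := isSimpleModule_iff_isAtom.mpr hAtom
  haveI : IsSimpleModule A (↥S₀ ⧸ (⊥ : Submodule A ↥S₀)) :=
    IsSimpleModule.congr (Submodule.quotEquivOfEqBot (⊥ : Submodule A ↥S₀) rfl)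
  have hfl : IsFiniteLength A ↥S₀ :=
    IsFiniteLength.of_simple_quotient (N := (⊥ : Submodule A ↥S₀))
      IsFiniteLength.of_subsingleton
  exact (isFiniteLength_iff_isNoetherian_isArtinian.mp hfl).2

end Atom

section ArtinianHalf

lemma exists_essential_artinian {S₀ : Submodule A A} (hEss : IsEssential S₀)
    (hAtom : IsAtom S₀) (M : Type) [AddCommGroup M] [Module A M] [Module.Finite A M]
    (ι : Type) (f : M →ₗ[A] (ι →₀ A)) (hf : Function.Injective f) :
    ∃ V : Submodule A M, IsEssential V ∧ IsArtinian A ↥V := by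
  classical
  obtain ⟨G, hG⟩ := (Module.finite_def.mp ‹Module.Finite A M›)
  set s : Finset ι := G.sup (fun m => (f m).support) with hs
  have hrange : ∀ m : M, f m ∈ Finsupp.supported A A (↑s : Set ι) := by
    have : LinearMap.range f ≤ Finsupp.supported A A (↑s : Set ι) := by
      rw [LinearMap.range_eq_map, ← hG, Submodule.map_span, Submodule.span_le]
      rintro y ⟨m, hm, rfl⟩
      rw [SetLike.mem_coe, Finsupp.mem_supported]
      intro i hi
      have h2 : i ∈ (f m).support := hi
      exact_mod_cast (Finset.le_sup (f := fun m => (f m).support) hm) h2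
    exact fun m => this ⟨m, rfl⟩
  refine ⟨(coordSub A S₀ ι).comap f, IsEssential.comap f hf (coordSub_essential hEss ι), ?_⟩
  set V := (coordSub A S₀ ι).comap f with hV
  haveI : IsArtinian A ↥S₀ := isArtinian_of_isAtom hAtom
  haveI : IsArtinian A ((↑s : Set ι) → ↥S₀) := inferInstance
  set q : ↥V →ₗ[A] ((↑s : Set ι) → ↥S₀) :=
    { toFun := fun x => fun i => ⟨f x.1 i.1, x.2 i.1⟩
      map_add' := by
        intro a b; funext i
        apply Subtype.ext
        simp
      map_smul' := by
        intro c a; funext i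
        apply Subtype.ext
        simp } with hq
  have hqinj : Function.Injective q := by
    intro a b hab
    apply Subtype.ext; apply hf
    ext i
    by_cases hi : i ∈ s
    · exact Subtype.ext_iff.mp (congrFun hab ⟨i, hi⟩)
    · have ha := hrange a.1
      have hb := hrange b.1
      rw [Finsupp.mem_supported] at ha hb
      have h1 : f (a : M) i = 0 := by
        by_contra h0
        exact hi (ha (Finsupp.mem_support_iff.mpr h0))
      have h2 : f (b : M) i = 0 := by
        by_contra h0
        exact hi (hb (Finsupp.mem_support_iff.mpr h0))
      rw [h1, h2]
  exact isArtinian_of_injective q hqinj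

variable (A) in
lemma artinian_of_emb {S₀ : Submodule A A} (hEss : IsEssential S₀) (hAtom : IsAtom S₀)
    (h : ∀ (M : Type) [AddCommGroup M] [Module A M], Module.Finite A M →
      EmbedsEssentiallyInFree A M) : IsArtinian A A := by
  rw [← monotone_stabilizes_iff_artinian]
  intro fc
  set g : ℕ → Submodule A A := fun n => OrderDual.ofDual (fc n) with hg
  have hganti : ∀ {n m : ℕ}, n ≤ m → g m ≤ g n := fun {n m} hnm => fc.monotone hnm
  set N : Submodule A A := ⨅ i, g i with hN
  have hNle : ∀ i, N ≤ g i := fun i => iInf_le g i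
  haveI : Module.Finite A (A ⧸ N) :=
    Module.Finite.of_surjective N.mkQ (Submodule.mkQ_surjective N)
  obtain ⟨ι, f, hfinj, hfess⟩ := h (A ⧸ N) inferInstance
  obtain ⟨V, hVess, hVart⟩ := exists_essential_artinian hEss hAtom (A ⧸ N) ι f hfinj
  set g' : ℕ → Submodule A (A ⧸ N) := fun n => (g n).map N.mkQ with hg'
  have hg'anti : ∀ {n m : ℕ}, n ≤ m → g' m ≤ g' n :=
    fun {n m} hnm => Submodule.map_mono (hganti hnm)
  haveI := hVart
  set k : ℕ →o (Submodule A ↥V)ᵒᵈ :=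
    ⟨fun n => OrderDual.toDual ((g' n).comap V.subtype),
     fun n m hnm => Submodule.comap_mono (hg'anti hnm)⟩ with hk
  obtain ⟨n₀, hn₀⟩ := IsArtinian.monotone_stabilizes k
  have hVinf : ∀ m, n₀ ≤ m → V ⊓ g' n₀ = V ⊓ g' m := by
    intro m hm
    have hkk : (g' n₀).comap V.subtype = (g' m).comap V.subtype := hn₀ m hm
    have h1 : Submodule.map V.subtype ((g' n₀).comap V.subtype)
        = Submodule.map V.subtype ((g' m).comap V.subtype) := by rw [hkk]
    rwa [Submodule.map_comap_subtype, Submodule.map_comap_subtype] at h1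
  have hbot : V ⊓ g' n₀ = ⊥ := by
    rw [eq_bot_iff]
    rintro x ⟨hxV, hxg⟩
    have hall : ∀ m, x ∈ g' m := by
      intro m
      rcases le_total n₀ m with hm | hm
      · have : x ∈ V ⊓ g' m := by rw [← hVinf m hm]; exact ⟨hxV, hxg⟩
        exact this.2
      · exact hg'anti hm hxg
    obtain ⟨r, rfl⟩ := Submodule.mkQ_surjective N x
    have hrall : ∀ m, r ∈ g m := by
      intro m
      obtain ⟨y, hy, hyx⟩ := hall m
      have hdiff : r - y ∈ N := by
        rw [← Submodule.Quotient.eq]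
        exact hyx.symm
      have hsum : r - y ∈ g m := hNle m hdiff
      simpa using (g m).add_mem hsum hy
    have hrN : r ∈ N := Submodule.mem_iInf g |>.mpr hrall
    simpa [Submodule.mem_bot] using (Submodule.Quotient.mk_eq_zero N).mpr hrN
  have hg'bot : g' n₀ = ⊥ := by
    by_contra h0
    exact hVess _ h0 hbot
  have hle : g n₀ ≤ N := by
    intro x hx
    have hmem : N.mkQ x ∈ g' n₀ := ⟨x, hx, rfl⟩
    rw [hg'bot] at hmem
    exact (Submodule.Quotient.mk_eq_zero N).mp hmem
  refine ⟨n₀, fun m hm => ?_⟩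
  have heq : g m = g n₀ := le_antisymm (hganti hm) (le_trans hle (hNle m))
  show OrderDual.toDual (g n₀) = OrderDual.toDual (g m)
  rw [heq]

end ArtinianHalf

section Transfer

variable {M N : Type} [AddCommGroup M] [Module A M] [AddCommGroup N] [Module A N]

lemma IsEssential.map (e : M ≃ₗ[A] N) {V : Submodule A M} (hV : IsEssential V) :
    IsEssential (V.map (e : M →ₗ[A] N)) := by
  intro X hX
  have hX' : X.comap (e : M →ₗ[A] N) ≠ ⊥ := by
    rw [Submodule.ne_bot_iff] at hX ⊢
    obtain ⟨x, hx, h0⟩ := hX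
    refine ⟨e.symm x, ?_, fun hh => h0 ?_⟩
    · show e (e.symm x) ∈ X; simpa using hx
    · have := congrArg e hh
      simpa using this
  obtain ⟨y, ⟨hyV, hyX⟩, hy0⟩ := (Submodule.ne_bot_iff _).mp (hV _ hX')
  rw [Submodule.ne_bot_iff]
  refine ⟨e y, ⟨⟨y, hyV, rfl⟩, hyX⟩, fun hh => hy0 ?_⟩
  have := congrArg e.symm hh
  simpa using this

end Transfer

section AtomExists

variable (A) in
lemma exists_atom [Nontrivial A]
    (h : ∀ (M : Type) [AddCommGroup M] [Module A M], Module.Finite A M →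
      EmbedsEssentiallyInFree A M) :
    ∃ S₀ : Submodule A A, IsEssential S₀ ∧ IsAtom S₀ := by
  classical
  obtain ⟨m, hm⟩ := Ideal.exists_maximal A
  have hco : IsCoatom m := Ideal.isMaximal_def.mp hm
  haveI : IsSimpleModule A (A ⧸ m) := isSimpleModule_iff_isCoatom.mpr hco
  haveI : Module.Finite A (A ⧸ m) :=
    Module.Finite.of_surjective m.mkQ (Submodule.mkQ_surjective m)
  obtain ⟨ι, f, hinj, hess⟩ := h (A ⧸ m) inferInstance
  haveI hsimp : IsSimpleModule A ↥(LinearMap.range f) :=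
    IsSimpleModule.congr (LinearEquiv.ofInjective f hinj).symm
  have hatom : IsAtom (LinearMap.range f) := isSimpleModule_iff_isAtom.mp hsimp
  obtain ⟨x, hxmem, hx0⟩ := (Submodule.ne_bot_iff _).mp hatom.1
  obtain ⟨i₀, hi₀⟩ : ∃ i, x i ≠ 0 := by
    by_contra hc; push_neg at hc
    exact hx0 (Finsupp.ext hc)
  have huniq : ∀ j : ι, j = i₀ := by
    intro j; by_contra hj
    set T : Submodule A (ι →₀ A) := LinearMap.range (Finsupp.lsingle j : A →ₗ[A] (ι →₀ A))
      with hT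
    have hTbot : T ≠ ⊥ := by
      rw [Submodule.ne_bot_iff]
      refine ⟨Finsupp.single j 1, ⟨1, rfl⟩, ?_⟩
      rw [Ne, Finsupp.single_eq_zero]
      exact one_ne_zero
    obtain ⟨y, ⟨hy1, hy2⟩, hy0⟩ := (Submodule.ne_bot_iff _).mp (hess T hTbot)
    have hrange_le : LinearMap.range f ≤ T := by
      have hle : Submodule.span A ({y} : Set (ι →₀ A)) ≤ LinearMap.range f := by
        rw [Submodule.span_le, Set.singleton_subset_iff]; exact hy1
      rcases lt_or_eq_of_le hle with hlt | heq
      · exfalso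
        have := hatom.2 _ hlt
        rw [Submodule.eq_bot_iff] at this
        exact hy0 (this y (Submodule.mem_span_singleton_self y))
      · rw [← heq, Submodule.span_le, Set.singleton_subset_iff]
        exact hy2
    obtain ⟨c, hc⟩ := hrange_le hxmem
    have : x i₀ = 0 := by
      rw [← hc]
      show (Finsupp.single j c) i₀ = 0
      exact Finsupp.single_eq_of_ne' hj
    exact hi₀ this
  haveI : Unique ι := ⟨⟨i₀⟩, huniq⟩
  set e : (ι →₀ A) ≃ₗ[A] A := Finsupp.LinearEquiv.finsuppUnique A A ι with he
  refine ⟨(LinearMap.range f).map (e : (ι →₀ A) →ₗ[A] A), IsEssential.map e hess, ?_⟩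
  have : (LinearMap.range f).map (e : (ι →₀ A) →ₗ[A] A)
      = Submodule.orderIsoMapComap e (LinearMap.range f) := rfl
  rw [this, OrderIso.isAtom_iff]
  exact hatom

end AtomExists

section EmbedIntoRing

lemma exists_embed_into_ring [Nontrivial A] {S₀ : Submodule A A} (hEss : IsEssential S₀)
    (hAtom : IsAtom S₀)
    (h : ∀ (M : Type) [AddCommGroup M] [Module A M], Module.Finite A M →
      EmbedsEssentiallyInFree A M)
    (M : Type) [AddCommGroup M] [Module A M] [Module.Finite A M]
    (ψ : A →ₗ[A] M) (hψ : Function.Injective ψ)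
    (hψess : IsEssential (LinearMap.range ψ)) :
    ∃ g : M →ₗ[A] A, Function.Injective g := by
  obtain ⟨ι, f, hfinj, hfess⟩ := h M inferInstance
  have huni : ∀ X Y : Submodule A (ι →₀ A), X ≠ ⊥ → Y ≠ ⊥ → X ⊓ Y ≠ ⊥ := by
    intro X Y hX hY
    have pull : ∀ Z : Submodule A (ι →₀ A), Z ≠ ⊥ → (Z.comap f).comap ψ ≠ ⊥ := by
      intro Z hZ
      obtain ⟨z, ⟨hz1, hz2⟩, hz0⟩ := (Submodule.ne_bot_iff _).mp (hfess Z hZ)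
      obtain ⟨mz, rfl⟩ := hz1
      have hmz : Z.comap f ≠ ⊥ := by
        rw [Submodule.ne_bot_iff]
        exact ⟨mz, hz2, fun h0 => hz0 (by rw [h0, map_zero])⟩
      obtain ⟨z', ⟨hz'1, hz'2⟩, hz'0⟩ := (Submodule.ne_bot_iff _).mp (hψess _ hmz)
      obtain ⟨az, rfl⟩ := hz'1
      rw [Submodule.ne_bot_iff]
      exact ⟨az, hz'2, fun h0 => hz'0 (by rw [h0, map_zero])⟩
    have hXA := atom_le hEss hAtom (pull X hX)
    have hYA := atom_le hEss hAtom (pull Y hY)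
    obtain ⟨s, hsS, hs0⟩ := (Submodule.ne_bot_iff _).mp hAtom.1
    rw [Submodule.ne_bot_iff]
    refine ⟨f (ψ s), ⟨hXA hsS, hYA hsS⟩, fun h0 => hs0 ?_⟩
    apply hψ; apply hfinj
    rw [h0, map_zero, map_zero]
  have hss : ∀ i j : ι, i = j := by
    intro i j; by_contra hij
    have hTi : LinearMap.range (Finsupp.lsingle i : A →ₗ[A] (ι →₀ A)) ≠ ⊥ := by
      rw [Submodule.ne_bot_iff]
      exact ⟨Finsupp.single i 1, ⟨1, rfl⟩, by rw [Ne, Finsupp.single_eq_zero]; exact one_ne_zero⟩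
    have hTj : LinearMap.range (Finsupp.lsingle j : A →ₗ[A] (ι →₀ A)) ≠ ⊥ := by
      rw [Submodule.ne_bot_iff]
      exact ⟨Finsupp.single j 1, ⟨1, rfl⟩, by rw [Ne, Finsupp.single_eq_zero]; exact one_ne_zero⟩
    apply huni _ _ hTi hTj
    rw [eq_bot_iff]
    rintro x ⟨⟨a, ha⟩, ⟨b, hb⟩⟩
    have hxj : x j = 0 := by
      rw [← ha]
      show (Finsupp.single i a) j = 0
      exact Finsupp.single_eq_of_ne' hij
    have : x = Finsupp.single j b := hb.symm
    rw [Submodule.mem_bot, this]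
    have hb0 : b = 0 := by
      have : (Finsupp.single j b) j = x j := by rw [this]
      rwa [Finsupp.single_eq_same, hxj] at this
    rw [hb0, Finsupp.single_zero]
  have hne : f (ψ 1) ≠ 0 := by
    intro h0
    exact (one_ne_zero : (1 : A) ≠ 0) (hψ (hfinj (by rw [h0, map_zero, map_zero])))
  obtain ⟨i₀, hi₀⟩ : ∃ i, f (ψ 1) i ≠ 0 := by
    by_contra hc; push_neg at hc
    exact hne (Finsupp.ext hc)
  haveI : Unique ι := ⟨⟨i₀⟩, fun j => hss j i₀⟩
  exact ⟨(Finsupp.LinearEquiv.finsuppUnique A A ι : (ι →₀ A) →ₗ[A] A).comp f,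
    (Finsupp.LinearEquiv.finsuppUnique A A ι).injective.comp hfinj⟩

end EmbedIntoRing

section Complement

variable {M : Type} [AddCommGroup M] [Module A M]

lemma exists_maximal_compl (B : Submodule A M) :
    ∃ C : Submodule A M, C ⊓ B = ⊥ ∧ ∀ D, C ≤ D → D ⊓ B = ⊥ → D = C := by
  have hchains : ∀ c ⊆ {D : Submodule A M | D ⊓ B = ⊥}, IsChain (· ≤ ·) c →
      ∀ y ∈ c, ∃ ub ∈ {D : Submodule A M | D ⊓ B = ⊥}, ∀ z ∈ c, z ≤ ub := by
    intro c hcs hchain y hy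
    refine ⟨sSup c, ?_, fun z hz => le_sSup hz⟩
    rw [Set.mem_setOf_eq, eq_bot_iff]
    rintro x ⟨hx1, hx2⟩
    obtain ⟨D, hD, hxD⟩ := (Submodule.mem_sSup_of_directed ⟨y, hy⟩ hchain.directedOn).mp hx1
    have hmem : x ∈ D ⊓ B := ⟨hxD, hx2⟩
    have hDbot : D ⊓ B = ⊥ := hcs hD
    rw [hDbot] at hmem
    exact hmem
  obtain ⟨C, _, hmax⟩ := zorn_le_nonempty₀ {D : Submodule A M | D ⊓ B = ⊥} hchains ⊥ (by simp)
  exact ⟨C, hmax.prop, fun D hCD hD => le_antisymm (hmax.2 hD hCD) hCD⟩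

lemma quotient_essential (B C : Submodule A M) (hC : C ⊓ B = ⊥)
    (hmax : ∀ D, C ≤ D → D ⊓ B = ⊥ → D = C) : IsEssential (B.map C.mkQ) := by
  intro X hX
  obtain ⟨xb, hxbX, hxb0⟩ := (Submodule.ne_bot_iff _).mp hX
  obtain ⟨x, rfl⟩ := C.mkQ_surjective xb
  have hxC : x ∉ C := fun hx => hxb0 ((Submodule.Quotient.mk_eq_zero C).mpr hx)
  set D := C ⊔ Submodule.span A ({x} : Set M) with hD
  have hDbot : D ⊓ B ≠ ⊥ := by
    intro h0
    exact hxC ((hmax D le_sup_left h0) ▸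
      (le_sup_right (a := C) (Submodule.mem_span_singleton_self x)))
  obtain ⟨y, ⟨hyD, hyB⟩, hy0⟩ := (Submodule.ne_bot_iff _).mp hDbot
  obtain ⟨cc, hcc, z, hz, rfl⟩ := Submodule.mem_sup.mp hyD
  obtain ⟨a, rfl⟩ := Submodule.mem_span_singleton.mp hz
  rw [Submodule.ne_bot_iff]
  refine ⟨C.mkQ (cc + a • x), ⟨⟨cc + a • x, hyB, rfl⟩, ?_⟩, ?_⟩
  · have hcc0 : C.mkQ cc = 0 := by
      rwa [Submodule.mkQ_apply, Submodule.Quotient.mk_eq_zero]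
    have heq : C.mkQ (cc + a • x) = a • C.mkQ x := by
      simp only [map_add, map_smul, hcc0, zero_add]
    rw [heq]
    exact X.smul_mem a hxbX
  · intro h0
    have hmem : cc + a • x ∈ C ⊓ B := ⟨(Submodule.Quotient.mk_eq_zero C).mp h0, hyB⟩
    rw [hC] at hmem
    exact hy0 hmem

end Complement

section UnitLemma

lemma exists_inverse [IsArtinian A A] (u : A) (hu : ∀ a, a * u = 0 → a = 0) :
    ∃ t : A, u * t = 1 ∧ t * u = 1 := by
  have hpow : ∀ (n : ℕ) (a : A), a * u ^ n = 0 → a = 0 := by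
    intro n
    induction n with
    | zero => intro a ha; simpa using ha
    | succ k ihk =>
      intro a ha
      rw [pow_succ, ← mul_assoc] at ha
      exact ihk _ (hu _ ha)
  have hmono : ∀ {n m : ℕ}, n ≤ m →
      Submodule.span A ({u ^ m} : Set A) ≤ Submodule.span A ({u ^ n} : Set A) := by
    intro n m hnm
    rw [Submodule.span_le, Set.singleton_subset_iff, SetLike.mem_coe,
      Submodule.mem_span_singleton]
    refine ⟨u ^ (m - n), ?_⟩
    rw [smul_eq_mul, ← pow_add]
    congr 1
    omega
  set ch : ℕ →o (Submodule A A)ᵒᵈ :=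
    ⟨fun n => OrderDual.toDual (Submodule.span A ({u ^ n} : Set A)),
     fun n m hnm => hmono hnm⟩ with hch
  obtain ⟨n₀, hn₀⟩ := IsArtinian.monotone_stabilizes ch
  have heq : Submodule.span A ({u ^ n₀} : Set A) = Submodule.span A ({u ^ (n₀ + 1)} : Set A) :=
    congrArg OrderDual.ofDual (hn₀ (n₀ + 1) (by omega))
  have hmem : u ^ n₀ ∈ Submodule.span A ({u ^ (n₀ + 1)} : Set A) :=
    heq ▸ Submodule.mem_span_singleton_self _
  obtain ⟨c, hc⟩ := Submodule.mem_span_singleton.mp hmem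
  rw [smul_eq_mul] at hc
  have hcu : c * u = 1 := by
    have h1 : (c * u - 1) * u ^ n₀ = 0 := by
      rw [sub_mul, one_mul, mul_assoc, ← pow_succ', hc, sub_self]
    have := hpow n₀ _ h1
    exact sub_eq_zero.mp this
  refine ⟨c, ?_, hcu⟩
  have h2 : (u * c - 1) * u = 0 := by
    rw [sub_mul, one_mul, mul_assoc, hcu, mul_one, sub_self]
  exact sub_eq_zero.mp (hu _ h2)

end UnitLemma

section Baer

lemma baer_target [Nontrivial A] [IsArtinian A A] {S₀ : Submodule A A}
    (hEss : IsEssential S₀) (hAtom : IsAtom S₀)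
    (h : ∀ (M : Type) [AddCommGroup M] [Module A M], Module.Finite A M →
      EmbedsEssentiallyInFree A M)
    (I : Ideal A) (g : ↥I →ₗ[A] A) :
    ∃ g' : A →ₗ[A] A, ∀ (x : A) (mem : x ∈ I), g' x = g ⟨x, mem⟩ := by
  classical
  set w : ↥I →ₗ[A] A × A :=
    { toFun := fun a => ((a : A), -g a)
      map_add' := by
        intro a b
        have : g (a + b) = g a + g b := map_add g a b
        simp [this, Prod.ext_iff, neg_add, add_comm]
      map_smul' := by
        intro c a
        have : g (c • a) = c • g a := map_smul g c a
        simp [this, Prod.ext_iff, smul_eq_mul] } with hw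
  set W := LinearMap.range w with hW
  set i₂ : A →ₗ[A] ((A × A) ⧸ W) := W.mkQ.comp (LinearMap.inr A A A) with hi₂def
  have hi₂ : Function.Injective i₂ := by
    intro x y hxy
    have hdiff : i₂ (x - y) = 0 := by rw [map_sub, hxy, sub_self]
    have hmem : ((0 : A), x - y) ∈ W := by
      have h0 : W.mkQ ((0 : A), x - y) = 0 := hdiff
      rwa [Submodule.mkQ_apply, Submodule.Quotient.mk_eq_zero] at h0
    obtain ⟨a, ha⟩ := hmem
    have ha1 : (a : A) = 0 := congrArg Prod.fst ha
    have ha0 : a = 0 := Subtype.ext ha1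
    have ha2 : -g a = x - y := congrArg Prod.snd ha
    rw [ha0, map_zero, neg_zero] at ha2
    exact sub_eq_zero.mp ha2.symm
  set B := LinearMap.range i₂ with hB
  obtain ⟨C, hC, hmax⟩ := exists_maximal_compl B
  set ψ : A →ₗ[A] (((A × A) ⧸ W) ⧸ C) := C.mkQ.comp i₂ with hψdef
  have hψinj : Function.Injective ψ := by
    intro x y hxy
    have hdiff : ψ (x - y) = 0 := by rw [map_sub, hxy, sub_self]
    have h1 : i₂ (x - y) ∈ C := by
      have h0 : C.mkQ (i₂ (x - y)) = 0 := hdiff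
      rwa [Submodule.mkQ_apply, Submodule.Quotient.mk_eq_zero] at h0
    have h2 : i₂ (x - y) ∈ C ⊓ B := ⟨h1, ⟨x - y, rfl⟩⟩
    rw [hC] at h2
    have h3 : i₂ (x - y) = 0 := h2
    have := hi₂ (by rw [h3, map_zero] : i₂ (x - y) = i₂ 0)
    exact sub_eq_zero.mp this
  have hψrange : LinearMap.range ψ = B.map C.mkQ := by
    rw [hψdef, LinearMap.range_comp]
  have hψess : IsEssential (LinearMap.range ψ) := by
    rw [hψrange]
    exact quotient_essential B C hC hmax
  haveI : Module.Finite A (A × A) := inferInstance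
  haveI : Module.Finite A ((A × A) ⧸ W) :=
    Module.Finite.of_surjective W.mkQ (Submodule.mkQ_surjective W)
  haveI : Module.Finite A (((A × A) ⧸ W) ⧸ C) :=
    Module.Finite.of_surjective C.mkQ (Submodule.mkQ_surjective C)
  obtain ⟨gE, hgE⟩ := exists_embed_into_ring hEss hAtom h (((A × A) ⧸ W) ⧸ C) ψ hψinj hψess
  set u := gE (ψ 1) with hu_def
  have hgψ : ∀ x : A, gE (ψ x) = x * u := by
    intro x
    have h1 : ψ x = x • ψ 1 := by rw [← map_smul, smul_eq_mul, mul_one]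
    rw [h1, map_smul, smul_eq_mul, hu_def]
  have hu : ∀ a, a * u = 0 → a = 0 := by
    intro a ha
    have h1 : gE (ψ a) = 0 := by rw [hgψ]; exact ha
    have h2 : ψ a = 0 := hgE (by rw [h1, map_zero])
    exact hψinj (by rw [h2, map_zero])
  obtain ⟨t, hut, htu⟩ := exists_inverse u hu
  set m₀ := C.mkQ (W.mkQ ((1 : A), (0 : A))) with hm₀
  set w₀ := gE m₀ with hw₀
  have hkey : ∀ (a : A) (ha : a ∈ I), a * w₀ = g ⟨a, ha⟩ * u := by
    intro a ha
    have h1 : a • (W.mkQ ((1 : A), (0 : A))) = W.mkQ (a, 0) := by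
      rw [← map_smul]
      congr 1
      rw [Prod.smul_mk, smul_eq_mul, mul_one, smul_zero]
    have h2 : W.mkQ ((a : A), (0 : A)) = W.mkQ (0, g ⟨a, ha⟩) := by
      rw [Submodule.mkQ_apply, Submodule.mkQ_apply, Submodule.Quotient.eq]
      refine ⟨⟨a, ha⟩, ?_⟩
      show (((⟨a, ha⟩ : ↥I) : A), -g ⟨a, ha⟩) = ((a : A), (0 : A)) - (0, g ⟨a, ha⟩)
      rw [Prod.mk_sub_mk, sub_zero, zero_sub]
    have h3 : a • m₀ = ψ (g ⟨a, ha⟩) := by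
      rw [hm₀, ← map_smul, h1, h2]
      rfl
    have h4 : gE (a • m₀) = a * w₀ := by rw [map_smul, smul_eq_mul, hw₀]
    rw [← h4, h3, hgψ]
  refine ⟨{ toFun := fun b => b * (w₀ * t)
            map_add' := fun x y => add_mul x y (w₀ * t)
            map_smul' := fun c x => by simp [smul_eq_mul, mul_assoc] }, ?_⟩
  intro x mem
  show x * (w₀ * t) = g ⟨x, mem⟩
  rw [← mul_assoc, hkey x mem, mul_assoc, hut, mul_one]

end Baer

section Glue

variable (R : Type) [Ring R]

/-- The canonical right-module isomorphism `R ≃ Rᵐᵒᵖ` over `Rᵐᵒᵖ`. -/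
def opEquiv : R ≃ₗ[Rᵐᵒᵖ] Rᵐᵒᵖ where
  toFun := MulOpposite.op
  invFun := MulOpposite.unop
  map_add' := fun _ _ => rfl
  map_smul' := fun _ _ => rfl
  left_inv := fun _ => rfl
  right_inv := fun _ => rfl

end Glue


end Statement2Aux
end PFPaper


namespace PFPaper

/-- Corollary 2.2, second part. If every finitely generated right
`R`-module embeds essentially in a free right `R`-module, then `R` is quasi-Frobenius. -/
theorem statement2 (R : Type) [Ring R]
    (h : ∀ (M : Type) [AddCommGroup M] [Module Rᵐᵒᵖ M], Module.Finite Rᵐᵒᵖ M →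
      EmbedsEssentiallyInFree Rᵐᵒᵖ M) :
    IsQF R := by
  classical
  by_cases hsub : Subsingleton R
  · constructor
    · exact ⟨fun X Y _ _ _ _ f _ g => ⟨0, fun x => Subsingleton.elim _ _⟩⟩
    · haveI : Finite R := Finite.of_subsingleton
      infer_instance
  · haveI : Nontrivial R := not_subsingleton_iff_nontrivial.mp hsub
    obtain ⟨S₀, hEss, hAtom⟩ := Statement2Aux.exists_atom Rᵐᵒᵖ h
    haveI hart : IsArtinian Rᵐᵒᵖ Rᵐᵒᵖ := Statement2Aux.artinian_of_emb Rᵐᵒᵖ hEss hAtom h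
    have hartR : IsArtinian Rᵐᵒᵖ R :=
      isArtinian_of_injective (Statement2Aux.opEquiv R : R →ₗ[Rᵐᵒᵖ] Rᵐᵒᵖ)
        (Statement2Aux.opEquiv R).injective
    refine ⟨?_, hartR⟩
    apply Module.Baer.injective
    intro I g
    obtain ⟨g', hg'⟩ := Statement2Aux.baer_target hEss hAtom h I
      (((Statement2Aux.opEquiv R) : R →ₗ[Rᵐᵒᵖ] Rᵐᵒᵖ).comp g)
    refine ⟨((Statement2Aux.opEquiv R).symm : Rᵐᵒᵖ →ₗ[Rᵐᵒᵖ] R).comp g', ?_⟩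
    intro x mem
    have := hg' x mem
    simp only [LinearMap.coe_comp, Function.comp_apply] at this ⊢
    rw [this]
    exact (Statement2Aux.opEquiv R).symm_apply_apply _

end PFPaper
end

section
/- Let R be a left perfect ring such that every finitely generated submodule of E(R_R) embeds in R_R (R is right tight). Then R is right self-injective. -/
namespace PFPaper

open CategoryTheory in
lemma exists_injective_envelope (A : Type) [Ring A] (M : Type) [AddCommGroup M] [Module A M] :
    ∃ (E : Type) (_ : AddCommGroup E) (_ : Module A E) (i : M →ₗ[A] E),
      IsInjectiveEnvelope A M E i := by
  classical
  -- Step 1: embed M into an injective module Q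
  obtain ⟨Q, _, _, hQinj, j, hj⟩ :
      ∃ (Q : Type) (_ : AddCommGroup Q) (_ : Module A Q) (_ : Module.Injective A Q)
        (j : M →ₗ[A] Q), Function.Injective j := by
    let X := ModuleCat.of A M
    let J := Injective.under X
    refine ⟨J, inferInstance, inferInstance, ?_, (Injective.ι X).hom, ?_⟩
    · have h : Injective (ModuleCat.of A J) := Injective.injective_under X
      exact Module.injective_module_of_injective_object A J
    · exact (ModuleCat.mono_iff_injective (Injective.ι X)).mp inferInstance
  -- Step 2: Zorn, maximal essential extension E of range j inside Q
  set s : Set (Submodule A Q) :=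
    {S | LinearMap.range j ≤ S ∧ ∀ X ≤ S, X ≠ ⊥ → LinearMap.range j ⊓ X ≠ ⊥} with hs
  have hranges : LinearMap.range j ∈ s := by
    refine ⟨le_rfl, fun X hX hXne => ?_⟩
    rwa [inf_eq_right.mpr hX]
  have hchain1 : ∀ c ⊆ s, IsChain (· ≤ ·) c → ∀ y ∈ c, ∃ ub ∈ s, ∀ z ∈ c, z ≤ ub := by
    intro c hcs hchain y hy
    refine ⟨sSup c, ⟨le_trans (hcs hy).1 (le_sSup hy), ?_⟩, fun z hz => le_sSup hz⟩
    intro X hX hXne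
    obtain ⟨x, hxX, hx0⟩ := X.ne_bot_iff.mp hXne
    obtain ⟨S, hSc, hxS⟩ :=
      (Submodule.mem_sSup_of_directed ⟨y, hy⟩ hchain.directedOn).mp (hX hxX)
    have h1 := (hcs hSc).2 (Submodule.span A {x})
      ((Submodule.span_singleton_le_iff_mem x S).mpr hxS)
      (by simpa [Submodule.span_singleton_eq_bot] using hx0)
    intro hbot
    exact h1 (le_bot_iff.mp (hbot ▸
      inf_le_inf_left _ ((Submodule.span_singleton_le_iff_mem x X).mpr hxX)))
  -- Step 3: Zorn, maximal C with E ⊓ C = ⊥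
  obtain ⟨E, -, hEs, hEmax⟩ := zorn_le_nonempty₀ s hchain1 (LinearMap.range j) hranges
  have hchain2 : ∀ c ⊆ {D : Submodule A Q | E ⊓ D = ⊥}, IsChain (· ≤ ·) c → ∀ y ∈ c,
      ∃ ub ∈ {D : Submodule A Q | E ⊓ D = ⊥}, ∀ z ∈ c, z ≤ ub := by
    intro c hct hchain y hy
    refine ⟨sSup c, ?_, fun z hz => le_sSup hz⟩
    rw [Set.mem_setOf_eq, eq_bot_iff]
    intro v hv
    obtain ⟨hvE, hvs⟩ := Submodule.mem_inf.mp hv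
    obtain ⟨D, hDc, hvD⟩ :=
      (Submodule.mem_sSup_of_directed ⟨y, hy⟩ hchain.directedOn).mp hvs
    exact (hct hDc) ▸ Submodule.mem_inf.mpr ⟨hvE, hvD⟩
  obtain ⟨C, -, hCmax⟩ := zorn_le_nonempty₀ {D : Submodule A Q | E ⊓ D = ⊥} hchain2 ⊥ (by simp)
  have hEC : E ⊓ C = ⊥ := hCmax.1
  -- Step 4: φ : E → Q/C injective
  set φ : ↥E →ₗ[A] Q ⧸ C := C.mkQ.comp E.subtype with hφ
  have hφinj : Function.Injective φ := by
    rw [← LinearMap.ker_eq_bot]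
    rw [LinearMap.ker_eq_bot']
    intro v hv
    have hvC : (v : Q) ∈ C := by
      simpa [φ, Submodule.Quotient.mk_eq_zero] using hv
    have : (v : Q) ∈ E ⊓ C := Submodule.mem_inf.mpr ⟨v.2, hvC⟩
    rw [hEC] at this
    exact Subtype.ext (by simpa using this)
  -- Step 5: range φ is essential in Q/C
  have hess : ∀ X : Submodule A (Q ⧸ C), X ≠ ⊥ → LinearMap.range φ ⊓ X ≠ ⊥ := by
    intro X hXne
    have hCle : C ≤ Submodule.comap C.mkQ X := by
      intro v hvC
      have : C.mkQ v = 0 := by simpa [Submodule.Quotient.mk_eq_zero] using hvC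
      simpa [Submodule.mem_comap, this] using X.zero_mem
    have hne : Submodule.comap C.mkQ X ≠ C := by
      intro h
      apply hXne
      rw [eq_bot_iff]
      intro u hu
      obtain ⟨v, rfl⟩ := Submodule.Quotient.mk_surjective C u
      have : v ∈ Submodule.comap C.mkQ X := by simpa [Submodule.mem_comap] using hu
      rw [h] at this
      simpa [Submodule.Quotient.mk_eq_zero] using this
    have hnbot : E ⊓ Submodule.comap C.mkQ X ≠ ⊥ := by
      intro h
      exact hne (le_antisymm (hCmax.2 h hCle) hCle)
    obtain ⟨v, hv, hv0⟩ := (E ⊓ Submodule.comap C.mkQ X).ne_bot_iff.mp hnbot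
    obtain ⟨hvE, hvX⟩ := Submodule.mem_inf.mp hv
    rw [Submodule.ne_bot_iff]
    refine ⟨C.mkQ v, Submodule.mem_inf.mpr ⟨⟨⟨v, hvE⟩, rfl⟩, hvX⟩, ?_⟩
    intro h0
    have hvC : v ∈ C := by simpa [Submodule.Quotient.mk_eq_zero] using h0
    have : v ∈ E ⊓ C := Submodule.mem_inf.mpr ⟨hvE, hvC⟩
    rw [hEC] at this
    exact hv0 (by simpa using this)
  -- Step 6: extend (φ)⁻¹ : range φ → E ⊆ Q to g' : Q/C → Q
  obtain ⟨g', hg'⟩ := hQinj.out φ hφinj E.subtype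
  -- Step 7: g' injective, range g' ≤ E
  have hg'inj : Function.Injective g' := by
    rw [← LinearMap.ker_eq_bot]
    by_contra hker
    obtain ⟨w, hw, hw0⟩ := (LinearMap.range φ ⊓ LinearMap.ker g').ne_bot_iff.mp (hess _ hker)
    obtain ⟨hwr, hwk⟩ := Submodule.mem_inf.mp hw
    obtain ⟨v, rfl⟩ := hwr
    have hv0 : E.subtype v = 0 := (hg' v).symm.trans (LinearMap.mem_ker.mp hwk)
    have : v = 0 := Subtype.ext (by simpa using hv0)
    rw [this] at hw0
    exact hw0 (map_zero φ)
  have hEle : E ≤ LinearMap.range g' := by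
    intro e he
    exact ⟨φ ⟨e, he⟩, hg' ⟨e, he⟩⟩
  have hrg' : LinearMap.range g' ≤ E := by
    refine hEmax ⟨le_trans hEs.1 hEle, ?_⟩ hEle
    intro X hX hXne
    obtain ⟨x, hxX, hx0⟩ := X.ne_bot_iff.mp hXne
    obtain ⟨u, rfl⟩ := hX hxX
    have hu0 : u ≠ 0 := by rintro rfl; simp at hx0
    have hsp : Submodule.span A {u} ≠ ⊥ := by simpa [Submodule.span_singleton_eq_bot] using hu0
    obtain ⟨w, hw, hw0⟩ := (LinearMap.range φ ⊓ Submodule.span A {u}).ne_bot_iff.mp (hess _ hsp)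
    obtain ⟨hwr, hwsp⟩ := Submodule.mem_inf.mp hw
    obtain ⟨v, rfl⟩ := hwr
    obtain ⟨c, hc⟩ := Submodule.mem_span_singleton.mp hwsp
    have hveq : (v : Q) = g' (φ v) := (hg' v).symm
    have hvX : (v : Q) ∈ X := by
      rw [hveq, ← hc, map_smul]
      exact X.smul_mem c hxX
    have hv0 : (v : Q) ≠ 0 := by
      intro h
      have : v = 0 := Subtype.ext (by simpa using h)
      rw [this] at hw0
      exact hw0 (map_zero φ)
    have hspv : Submodule.span A {(v : Q)} ≠ ⊥ := by
      simpa [Submodule.span_singleton_eq_bot] using hv0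
    have h1 := hEs.2 (Submodule.span A {(v : Q)})
      ((Submodule.span_singleton_le_iff_mem _ _).mpr v.2) hspv
    intro hbot
    exact h1 (le_bot_iff.mp (hbot ▸
      inf_le_inf_left _ ((Submodule.span_singleton_le_iff_mem _ _).mpr hvX)))
  -- Step 8: the projection p : Q → Q with range in E, identity on E
  set p : Q →ₗ[A] Q := g'.comp C.mkQ with hp
  have hp2 : ∀ q : Q, p q ∈ E := fun q => hrg' ⟨C.mkQ q, rfl⟩
  have hp1 : ∀ e : Q, e ∈ E → p e = e := by
    intro e he
    have : p e = g' (φ ⟨e, he⟩) := rfl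
    rw [this, hg']
    rfl
  -- Step 9: E is injective
  have hEinj : Module.Injective A ↥E := by
    constructor
    intro X Y _ _ _ _ f hf g
    obtain ⟨h, hh⟩ := hQinj.out f hf (E.subtype.comp g)
    refine ⟨LinearMap.codRestrict E (p.comp h) (fun y => hp2 _), fun x => ?_⟩
    apply Subtype.ext
    show p (h (f x)) = (g x : Q)
    rw [hh x]
    exact hp1 _ (g x).2
  -- Step 10: assemble
  have hje : ∀ m : M, j m ∈ E := fun m => hEs.1 ⟨m, rfl⟩
  refine ⟨↥E, inferInstance, inferInstance, LinearMap.codRestrict E j hje, hEinj, ?_, ?_⟩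
  · intro a b hab
    exact hj (by simpa [Subtype.ext_iff] using hab)
  · intro X hXne
    obtain ⟨x, hxX, hx0⟩ := X.ne_bot_iff.mp hXne
    have hx0' : (x : Q) ≠ 0 := fun h => hx0 (Subtype.ext h)
    have hspx : Submodule.span A {(x : Q)} ≠ ⊥ := by
      simpa [Submodule.span_singleton_eq_bot] using hx0'
    have h1 := hEs.2 (Submodule.span A {(x : Q)})
      ((Submodule.span_singleton_le_iff_mem _ _).mpr x.2) hspx
    obtain ⟨w, hw, hw0⟩ :=
      (LinearMap.range j ⊓ Submodule.span A {(x : Q)}).ne_bot_iff.mp h1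
    obtain ⟨hwr, hwsp⟩ := Submodule.mem_inf.mp hw
    obtain ⟨m, hm⟩ := hwr
    obtain ⟨c, hc⟩ := Submodule.mem_span_singleton.mp hwsp
    rw [Submodule.ne_bot_iff]
    refine ⟨c • x, Submodule.mem_inf.mpr ⟨⟨m, ?_⟩, X.smul_mem c hxX⟩, ?_⟩
    · apply Subtype.ext
      show j m = ((c • x : ↥E) : Q)
      rw [hm, ← hc]
      rfl
    · intro h
      apply hw0
      rw [← hc]
      have : ((c • x : ↥E) : Q) = 0 := by rw [h]; rfl
      simpa using this

/-- Proposition 2.17. Any left perfect and right tight ring is right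
self-injective. -/
theorem statement11 (R : Type) [Ring R] (hperf : LeftPerfect R) (htight : RightTight R) :
    Module.Injective Rᵐᵒᵖ R := by
  obtain ⟨E, instE1, instE2, i, henv⟩ := exists_injective_envelope Rᵐᵒᵖ R
  obtain ⟨hEinj, hiinj, hessE⟩ := henv
  have hsurj : Function.Surjective i := by
    intro x
    set C : Submodule Rᵐᵒᵖ E := Submodule.span Rᵐᵒᵖ {i 1, x} with hC
    have hxC : x ∈ C := Submodule.subset_span (by simp)
    have hrange : ∀ r : R, i r ∈ C := by
      intro r
      have h1 : i r = MulOpposite.op r • i 1 := by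
        rw [← map_smul]
        congr 1
        rw [op_smul_eq_mul, one_mul]
      rw [h1]
      exact C.smul_mem _ (Submodule.subset_span (by simp))
    obtain ⟨f, hf⟩ := htight E i ⟨hEinj, hiinj, hessE⟩ C
      (Submodule.fg_span ((Set.finite_singleton _).insert _))
    set g : R →ₗ[Rᵐᵒᵖ] R := f.comp (LinearMap.codRestrict C i hrange) with hg
    have hginj : Function.Injective g := by
      apply hf.comp
      intro a b hab
      exact hiinj (by simpa [Subtype.ext_iff] using hab)
    set a : R := g 1 with ha
    have hgr : ∀ r : R, g r = a * r := by
      intro r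
      have h1 : (r : R) = MulOpposite.op r • (1 : R) := by
        rw [op_smul_eq_mul, one_mul]
      conv_lhs => rw [h1]
      rw [map_smul, op_smul_eq_mul, ha]
    have hcancel : ∀ n : ℕ, ∀ u v : R, a ^ n * u = a ^ n * v → u = v := by
      intro n
      induction n with
      | zero => intro u v h; simpa using h
      | succ n ih =>
        intro u v h
        have h2 : a ^ n * (a * u) = a ^ n * (a * v) := by
          rw [← mul_assoc, ← mul_assoc, ← pow_succ]
          exact h
        have h3 : a * u = a * v := ih _ _ h2
        exact hginj (by rw [hgr, hgr]; exact h3)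
    have hdesc : ∀ n : ℕ, Submodule.span Rᵐᵒᵖ {a ^ (n + 1 + 1)} ≤ Submodule.span Rᵐᵒᵖ {a ^ (n + 1)} := by
      intro m
      apply (Submodule.span_singleton_le_iff_mem _ _).mpr
      apply Submodule.mem_span_singleton.mpr
      exact ⟨MulOpposite.op a, by rw [op_smul_eq_mul, ← pow_succ]⟩
    obtain ⟨n, hn⟩ := hperf (fun n => Submodule.span Rᵐᵒᵖ {a ^ (n + 1)})
      (fun n => ⟨a ^ (n + 1), rfl⟩) hdesc
    have h1 : a ^ (n + 1) ∈ Submodule.span Rᵐᵒᵖ {a ^ (n + 2)} := by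
      have := hn (n + 1) (Nat.le_succ n)
      rw [this]
      exact Submodule.mem_span_singleton_self _
    obtain ⟨c, hc⟩ := Submodule.mem_span_singleton.mp h1
    have hc' : a ^ (n + 2) * c.unop = a ^ (n + 1) := by
      rw [← MulOpposite.op_unop c, op_smul_eq_mul] at hc
      exact hc
    have h2 : a ^ (n + 1) * (a * c.unop) = a ^ (n + 1) * 1 := by
      rw [mul_one, ← mul_assoc, ← pow_succ]
      exact hc'
    have hat : a * c.unop = 1 := hcancel (n + 1) _ _ h2
    set y : R := f ⟨x, hxC⟩ with hy
    have h3 : g (c.unop * y) = y := by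
      rw [hgr, ← mul_assoc, hat, one_mul]
    have h4 : f ((LinearMap.codRestrict C i hrange) (c.unop * y)) = f ⟨x, hxC⟩ := h3
    have h5 := hf h4
    exact ⟨c.unop * y, by simpa [Subtype.ext_iff] using h5⟩
  have e : R ≃ₗ[Rᵐᵒᵖ] E := LinearEquiv.ofBijective i ⟨hiinj, hsurj⟩
  constructor
  intro X Y _ _ _ _ f hf g
  obtain ⟨h, hh⟩ := hEinj.out f hf (e.toLinearMap.comp g)
  refine ⟨(e.symm.toLinearMap).comp h, fun x => ?_⟩
  simp only [LinearMap.comp_apply, LinearEquiv.coe_toLinearMap] at *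
  rw [hh x]
  exact e.symm_apply_apply (g x)

end PFPaper
end

section
/- Let R be a right artinian ring such that every finitely generated submodule of E(R_R) embeds in R_R (R is right tight). Then R is quasi-Frobenius (QF). -/
namespace PFAux

open Function

variable {A : Type} [Ring A]

section Ess

variable {Q : Type} [AddCommGroup Q] [Module A Q]

/-- Elementwise essential extension of submodules. -/
def EssIn (N D : Submodule A Q) : Prop :=
  N ≤ D ∧ ∀ x ∈ D, x ≠ 0 → ∃ r : A, r • x ∈ N ∧ r • x ≠ 0

lemma essIn_refl (N : Submodule A Q) : EssIn N N :=
  ⟨le_rfl, fun x hx hx0 => ⟨1, by simpa using hx, by simpa using hx0⟩⟩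

lemma essIn_trans {N D D' : Submodule A Q} (h1 : EssIn N D) (h2 : EssIn D D') : EssIn N D' := by
  refine ⟨h1.1.trans h2.1, fun x hx hx0 => ?_⟩
  obtain ⟨r, hr, hr0⟩ := h2.2 x hx hx0
  obtain ⟨s, hs, hs0⟩ := h1.2 _ hr hr0
  exact ⟨s * r, by rwa [mul_smul], by rwa [mul_smul]⟩

lemma exists_max_essIn (N : Submodule A Q) :
    ∃ D : Submodule A Q, EssIn N D ∧ ∀ D', EssIn N D' → D ≤ D' → D' = D := by
  obtain ⟨D, -, hD⟩ := zorn_le_nonempty₀ {D : Submodule A Q | EssIn N D}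
    (fun c hc hchain y hy => by
      refine ⟨sSup c, ⟨?_, ?_⟩, fun z hz => le_sSup hz⟩
      · exact (hc hy).1.trans (le_sSup hy)
      · intro x hx hx0
        obtain ⟨p, hp, hxp⟩ := (Submodule.mem_sSup_of_directed ⟨y, hy⟩
          hchain.directedOn).1 hx
        exact (hc hp).2 x hxp hx0)
    N (essIn_refl N)
  exact ⟨D, hD.1, fun D' hD' hle => le_antisymm (hD.2 hD' hle) hle⟩

lemma exists_max_disjoint (D : Submodule A Q) :
    ∃ C : Submodule A Q, D ⊓ C = ⊥ ∧ ∀ C', D ⊓ C' = ⊥ → C ≤ C' → C' = C := by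
  obtain ⟨C, -, hC⟩ := zorn_le_nonempty₀ {C : Submodule A Q | D ⊓ C = ⊥}
    (fun c hc hchain y hy => by
      refine ⟨sSup c, ?_, fun z hz => le_sSup hz⟩
      rw [Set.mem_setOf_eq, eq_bot_iff]
      intro x hx
      obtain ⟨p, hp, hxp⟩ := (Submodule.mem_sSup_of_directed ⟨y, hy⟩
        hchain.directedOn).1 hx.2
      have : x ∈ D ⊓ p := ⟨hx.1, hxp⟩
      rwa [hc hp] at this)
    ⊥ (by simp)
  exact ⟨C, hC.1, fun C' hC' hle => le_antisymm (hC.2 hC' hle) hle⟩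

/-- A submodule of an injective module maximal among essential extensions (of anything)
inside it is a direct summand. -/
lemma isCompl_of_max_essIn (hQ : Module.Injective A Q) (D : Submodule A Q)
    (hmax : ∀ D', EssIn D D' → D' = D) : ∃ C : Submodule A Q, IsCompl D C := by
  obtain ⟨C, hDC, hCmax⟩ := exists_max_disjoint D
  -- the map D → Q ⧸ C is injective
  set π : Q →ₗ[A] Q ⧸ C := C.mkQ with hπ
  set m : ↥D →ₗ[A] Q ⧸ C := π.comp D.subtype with hm
  have hminj : Function.Injective m := by
    intro a b hab
    have hab' : Submodule.Quotient.mk (p := C) (a : Q) = Submodule.Quotient.mk (b : Q) := hab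
    have h1 : ((a : Q) - b) ∈ C := (Submodule.Quotient.eq C).mp hab'
    have h2 : ((a : Q) - b) ∈ D ⊓ C := ⟨sub_mem a.2 b.2, h1⟩
    rw [hDC] at h2
    exact Subtype.ext (sub_eq_zero.mp h2)
  -- range m is (elementwise) essential in Q ⧸ C
  have hess : ∀ y : Q ⧸ C, y ≠ 0 → ∃ r : A, r • y ∈ LinearMap.range m ∧ r • y ≠ 0 := by
    intro y hy0
    obtain ⟨q, rfl⟩ := Submodule.mkQ_surjective C y
    have hqC : q ∉ C := fun h => hy0 ((Submodule.Quotient.mk_eq_zero C).mpr h)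
    -- C + span q strictly contains C, so it meets D
    have hne : C ⊔ Submodule.span A {q} ≠ C := by
      intro h
      exact hqC (h ▸ Submodule.mem_sup_right (Submodule.mem_span_singleton_self q))
    have hmeet : D ⊓ (C ⊔ Submodule.span A {q}) ≠ ⊥ := by
      intro h
      exact hne (hCmax _ h le_sup_left)
    obtain ⟨d, hd, hd0⟩ := Submodule.exists_mem_ne_zero_of_ne_bot hmeet
    obtain ⟨c, hc, s, hs, hdc⟩ := Submodule.mem_sup.mp hd.2
    obtain ⟨r, rfl⟩ := Submodule.mem_span_singleton.mp hs
    have hc0 : π c = 0 := by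
      simpa [π] using (Submodule.Quotient.mk_eq_zero C).mpr hc
    have hπd : π d = r • π q := by
      rw [← hdc, map_add, map_smul, hc0, zero_add]
    have hπd0 : π d ≠ 0 := by
      intro h
      have hdC : d ∈ C := by
        have := (Submodule.Quotient.mk_eq_zero C).mp (by simpa [π] using h)
        exact this
      have h2 : d ∈ D ⊓ C := ⟨hd.1, hdC⟩
      rw [hDC] at h2
      exact hd0 h2
    exact ⟨r, ⟨⟨d, hd.1⟩, hπd⟩, fun h => hπd0 (by rw [hπd]; exact h)⟩
    -- extend the inclusion D ↪ Q along m
  obtain ⟨h, hh⟩ := hQ.out m hminj D.subtype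
  have hhinj : Function.Injective h := by
    rw [← LinearMap.ker_eq_bot]
    by_contra hker
    obtain ⟨y, hy, hy0⟩ := Submodule.exists_mem_ne_zero_of_ne_bot hker
    obtain ⟨r, ⟨d, hd⟩, hr0⟩ := hess y hy0
    have h1 : h (r • y) = 0 := by
      rw [map_smul, LinearMap.mem_ker.mp hy, smul_zero]
    have h2 : (d : Q) = 0 := by
      have h2' := hh d
      rw [hd, h1] at h2'
      exact h2'.symm
    have h3 : d = 0 := Subtype.ext h2
    rw [h3, map_zero] at hd
    exact hr0 hd.symm
  -- D is essential in range h, so range h = D by maximality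
  have hDle : D ≤ LinearMap.range h := fun x hx => ⟨m ⟨x, hx⟩, hh ⟨x, hx⟩⟩
  have hrange : LinearMap.range h = D := by
    apply hmax
    refine ⟨hDle, fun x hx hx0 => ?_⟩
    obtain ⟨y, rfl⟩ := hx
    have hy0 : y ≠ 0 := fun h0 => hx0 (by rw [h0, map_zero])
    obtain ⟨r, hr, hr0⟩ := hess y hy0
    obtain ⟨d, hd⟩ := hr
    refine ⟨r, ?_, ?_⟩
    · rw [← map_smul, ← hd, hh]
      exact d.2
    · rw [← map_smul]
      intro h0
      exact hr0 (by rw [← hhinj (h0.trans (map_zero h).symm)] )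
  -- Q = D ⊔ C
  refine ⟨C, ?_, ?_⟩
  · rw [disjoint_iff, hDC]
  · rw [codisjoint_iff, eq_top_iff]
    intro q _
    have hq : h (π q) ∈ D := hrange ▸ ⟨π q, rfl⟩
    have hπd : π (h (π q)) = π q := by
      have h1 : h (m ⟨h (π q), hq⟩) = h (π q) := hh _
      exact hhinj h1
    have : q - h (π q) ∈ C := by
      rw [← Submodule.Quotient.mk_eq_zero C]
      have : π (q - h (π q)) = 0 := by rw [map_sub, hπd, sub_self]
      simpa [π] using this
    have hq2 : q = h (π q) + (q - h (π q)) := by abel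
    exact hq2 ▸ Submodule.add_mem_sup hq this

/-- A direct summand of an injective module is injective. -/
lemma injective_of_isCompl (hQ : Module.Injective A Q) {D C : Submodule A Q}
    (hc : IsCompl D C) : Module.Injective A ↥D := by
  constructor
  intro X Y _ _ _ _ f hf g
  obtain ⟨h, hh⟩ := hQ.out f hf (D.subtype.comp g)
  refine ⟨(D.linearProjOfIsCompl C hc).comp h, fun x => ?_⟩
  have : h (f x) = (g x : Q) := hh x
  simp only [LinearMap.comp_apply, this]
  exact Submodule.linearProjOfIsCompl_apply_left hc (g x)

lemma Module.Injective.of_equiv {M N : Type} [AddCommGroup M] [Module A M]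
    [AddCommGroup N] [Module A N] (e : M ≃ₗ[A] N) (hM : Module.Injective A M) :
    Module.Injective A N := by
  constructor
  intro X Y _ _ _ _ f hf g
  obtain ⟨h, hh⟩ := hM.out f hf (e.symm.toLinearMap.comp g)
  exact ⟨e.toLinearMap.comp h, fun x => by simp [hh x]⟩

end Ess

/-- Every module embeds into an injective module. -/
lemma exists_injective_extension (M : Type) [AddCommGroup M] [Module A M] :
    ∃ (Q : Type) (_ : AddCommGroup Q) (_ : Module A Q) (f : M →ₗ[A] Q),
      Module.Injective A Q ∧ Function.Injective f := by
  let Mc : ModuleCat A := ModuleCat.of A M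
  let Qc : ModuleCat A := CategoryTheory.Injective.under Mc
  let ι : Mc ⟶ Qc := CategoryTheory.Injective.ι Mc
  have hmono : CategoryTheory.Mono ι := inferInstance
  have hinj : Function.Injective ι := (ModuleCat.mono_iff_injective ι).mp hmono
  have hQ : Module.Injective A ↥Qc := by
    have hi : CategoryTheory.Injective (ModuleCat.of A ↥Qc) :=
      inferInstanceAs (CategoryTheory.Injective Qc)
    exact Module.injective_module_of_injective_object A ↥Qc
  exact ⟨↥Qc, inferInstance, inferInstance, ι.hom, hQ, hinj⟩

end PFAux

namespace PFPaper

open PFAux in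
/-- Corollary 2.18. If `R` is right artinian and right tight, then `R`
is quasi-Frobenius. -/
theorem statement12 (R : Type) [Ring R] (hart : IsArtinian Rᵐᵒᵖ R) (htight : RightTight R) :
    IsQF R := by
  refine ⟨?_, hart⟩
  obtain ⟨Q, _, _, f, hQ, hf⟩ := PFAux.exists_injective_extension (A := Rᵐᵒᵖ) R
  obtain ⟨D, hND, hNmax⟩ := PFAux.exists_max_essIn (LinearMap.range f)
  have hDmax : ∀ D', PFAux.EssIn D D' → D' = D := fun D' h =>
    hNmax D' (PFAux.essIn_trans hND h) h.1
  obtain ⟨C0, hcompl⟩ := PFAux.isCompl_of_max_essIn hQ D hDmax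
  have hDinj : Module.Injective Rᵐᵒᵖ ↥D := PFAux.injective_of_isCompl hQ hcompl
  set i : R →ₗ[Rᵐᵒᵖ] ↥D := f.codRestrict D (fun r => hND.1 ⟨r, rfl⟩) with hi
  have hiinj : Function.Injective i := fun a b hab => hf (congrArg Subtype.val hab)
  have henv : IsInjectiveEnvelope Rᵐᵒᵖ R ↥D i := by
    refine ⟨hDinj, hiinj, ?_⟩
    intro X hX
    obtain ⟨x, hxX, hx0⟩ := Submodule.exists_mem_ne_zero_of_ne_bot hX
    have hx0' : (x : Q) ≠ 0 := fun h => hx0 (Subtype.ext h)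
    obtain ⟨r, ⟨a, ha⟩, hr0⟩ := hND.2 (x : Q) x.2 hx0'
    rw [Submodule.ne_bot_iff]
    exact ⟨r • x, ⟨⟨a, Subtype.ext ha⟩, X.smul_mem r hxX⟩,
      fun h0 => hr0 (congrArg Subtype.val h0)⟩
  haveI := hart
  have hisurj : Function.Surjective i := by
    intro x
    set C : Submodule Rᵐᵒᵖ ↥D := Submodule.span Rᵐᵒᵖ {i 1, x} with hC
    have hCfg : C.FG :=
      Submodule.fg_span ((Set.finite_singleton x).insert (i 1))
    obtain ⟨g, hg⟩ := htight ↥D i henv C hCfg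
    have hone : ∀ r : R, MulOpposite.op r • (1 : R) = r := fun r => one_mul r
    have hri : ∀ r : R, i r ∈ C := by
      intro r
      have h1 : i r = MulOpposite.op r • i 1 := by
        rw [← map_smul, hone]
      rw [h1]
      exact C.smul_mem _ (Submodule.subset_span (by simp))
    set j : R →ₗ[Rᵐᵒᵖ] ↥C := i.codRestrict C hri with hj
    have hjinj : Function.Injective j := fun a b hab =>
      hiinj (congrArg Subtype.val hab)
    have hgjinj : Function.Injective (g ∘ₗ j) := hg.comp hjinj
    have hgjsurj : Function.Surjective (g ∘ₗ j) :=
      IsArtinian.surjective_of_injective_endomorphism (g ∘ₗ j) hgjinj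
    have hjsurj : Function.Surjective j := by
      intro c
      obtain ⟨r, hr⟩ := hgjsurj (g c)
      exact ⟨r, hg hr⟩
    have hxC : x ∈ C := Submodule.subset_span (by simp)
    obtain ⟨r, hr⟩ := hjsurj ⟨x, hxC⟩
    exact ⟨r, congrArg Subtype.val hr⟩
  exact PFAux.Module.Injective.of_equiv
    (LinearEquiv.ofBijective i ⟨hiinj, hisurj⟩).symm hDinj

end PFPaper
end
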